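/- arXiv:1206.6739 — 2 statements merged into one kernel-verified Lean document; each statement's English description precedes it below -/
import Mathlib

section
/- Let G be a locally compact Hausdorff group with a left Haar measure, acting continuously, freely, and properly on a locally compact Hausdorff space Ω. Then for every u ∈ Ω there exists a nonnegative continuous compactly supported function g : Ω → ℝ such that ∫_G g(s⁻¹·u) ds = 1. -/
open MeasureTheory

/-! Take a bump function `f ≥ 0` on `Ω` with `f u > 0`. Properness of the action makes
`s ↦ f (s⁻¹ • u)` compactly supported on `G`, so its Haar integral is finite, and it is positive
because Haar measure charges open sets; dividing `f` by this integral gives the cutoff. -/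

theorem HasCompactSupport.comp_inv_smul {G X M : Type*} [Group G] [TopologicalSpace G]
    [IsTopologicalGroup G] [TopologicalSpace X] [MulAction G X] [ProperSMul G X] [Zero M]
    {f : X → M} (hf : HasCompactSupport f) (x : X) :
    HasCompactSupport fun g : G => f (g⁻¹ • x) := by
  have hK : IsCompact {g : G | g • x ∈ tsupport f} := by
    simpa using ProperSMul.isCompact_setOfPred_inter_nonempty (G := G) isCompact_singleton hf
  exact .of_support_subset_isCompact hK.inv fun g hg => by simpa using subset_tsupport f hg

theorem exists_bruhat_cutoff_general
    {G Ω : Type*} [Group G] [TopologicalSpace G] [IsTopologicalGroup G]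
    [MeasurableSpace G] [BorelSpace G]
    (μ : Measure G) [μ.IsHaarMeasure]
    [TopologicalSpace Ω] [LocallyCompactSpace Ω] [T2Space Ω]
    [MulAction G Ω] [ContinuousSMul G Ω]
    (hproper : IsProperMap (fun p : G × Ω => (p.1 • p.2, p.2)))
    (u : Ω) :
    ∃ g : Ω → ℝ, Continuous g ∧ HasCompactSupport g ∧ (∀ v, 0 ≤ g v) ∧
      ∫ s, g (s⁻¹ • u) ∂μ = 1 := by
  have : ProperSMul G Ω := ⟨hproper⟩
  obtain ⟨f, hf_comp, hf_nonneg, hf_u⟩ := exists_continuous_nonneg_pos u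
  have hI : 0 < ∫ s, f (s⁻¹ • u) ∂μ :=
    Continuous.integral_pos_of_hasCompactSupport_nonneg_nonzero (x := 1) (by fun_prop)
      (hf_comp.comp_inv_smul u) (fun s => hf_nonneg _) (by simpa using hf_u)
  refine ⟨fun v => (∫ s, f (s⁻¹ • u) ∂μ)⁻¹ * f v, by fun_prop, hf_comp.mul_left,
    fun v => mul_nonneg (inv_nonneg.2 hI.le) (hf_nonneg v), ?_⟩
  rw [integral_const_mul, inv_mul_cancel₀ hI.ne']

/-- If a second countable locally compact Hausdorff group `G` with a left Haar measure acts
continuously, freely and properly on a second countable locally compact Hausdorff space `Ω`,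
then for every `u ∈ Ω` there is a nonnegative continuous compactly supported function
`g : Ω → ℝ` with `∫_G g(s⁻¹ • u) ds = 1`. -/
theorem exists_bruhat_cutoff
    {G Ω : Type*} [Group G] [TopologicalSpace G] [IsTopologicalGroup G]
    [LocallyCompactSpace G] [T2Space G] [SecondCountableTopology G]
    [MeasurableSpace G] [BorelSpace G]
    (μ : Measure G) [μ.IsHaarMeasure]
    [TopologicalSpace Ω] [LocallyCompactSpace Ω] [T2Space Ω] [SecondCountableTopology Ω]
    [MulAction G Ω] [ContinuousSMul G Ω]
    (hfree : ∀ (s : G) (u : Ω), s • u = u → s = 1)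
    (hproper : IsProperMap (fun p : G × Ω => (p.1 • p.2, p.2)))
    (u : Ω) :
    ∃ g : Ω → ℝ, Continuous g ∧ HasCompactSupport g ∧ (∀ v, 0 ≤ g v) ∧
      ∫ s, g (s⁻¹ • u) ∂μ = 1 :=
  exists_bruhat_cutoff_general μ hproper u
end

section
/- Let G act properly on Ω with left Haar measure on G, and suppose q : Ω → G\Ω is the (open) quotient map. Then the averaging map Ψ : C_c(Ω) → C_c(G\Ω), given by Ψ(a)(q(u)) = ∫_G a(s⁻¹·u) ds, is surjective. In particular, for every f ∈ C_c(G\Ω) there exists a ∈ C_c(Ω) with Ψ(a) = f. -/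
/-!
Write `Ψ = orbitIntegral μ` and `q` for the orbit map. Choose a continuous compactly
supported `h ≥ 0` equal to `1` on a compact set whose image under `q` covers the support of
`f`. Properness makes `s ↦ h (s⁻¹ • u)` supported in one compact set for all `u` near a given
point, so `Ψ h` is continuous; it is `G`-invariant by left invariance of Haar measure and
positive over the support of `f`. Since `Ψ` pulls out `G`-invariant factors,
`a = h • (f ∘ q) / Ψ h` satisfies `Ψ a = f ∘ q`.
-/

open MeasureTheory Set Function Pointwise

theorem IsOpenMap.exists_isCompact_image_superset {X Y : Type*} [TopologicalSpace X]
    [TopologicalSpace Y] [WeaklyLocallyCompactSpace X] {π : X → Y} (hopen : IsOpenMap π)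
    (hsurj : Surjective π) {K : Set Y} (hK : IsCompact K) :
    ∃ L : Set X, IsCompact L ∧ K ⊆ π '' L := by
  choose C hC hxC using fun x : X ↦ exists_compact_mem_nhds x
  obtain ⟨t, ht⟩ := hK.elim_finite_subcover (fun x ↦ π '' interior (C x))
    (fun x ↦ hopen _ isOpen_interior) fun y _ ↦
      let ⟨x, hx⟩ := hsurj y
      mem_iUnion.2 ⟨x, x, mem_interior_iff_mem_nhds.2 (hxC x), hx⟩
  refine ⟨⋃ x ∈ t, C x, t.isCompact_biUnion fun x _ ↦ hC x, ?_⟩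
  rw [image_iUnion₂]
  exact ht.trans (iUnion₂_mono fun x _ ↦ image_mono interior_subset)

namespace MulAction

variable {G Ω : Type*} [Group G] [MulAction G Ω]

theorem support_comp_inv_smul_subset [TopologicalSpace Ω] {M : Type*} [Zero M] (h : Ω → M)
    {N : Set Ω} {u : Ω} (hu : u ∈ N) :
    support (fun s : G ↦ h (s⁻¹ • u)) ⊆ {s | (s • tsupport h ∩ N).Nonempty} :=
  fun s hs ↦ ⟨u, ⟨s⁻¹ • u, subset_tsupport _ hs, smul_inv_smul s u⟩, hu⟩

variable [MeasurableSpace G] (μ : Measure G) {E : Type*} [NormedAddCommGroup E]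
  [NormedSpace ℝ E]

noncomputable def orbitIntegral (h : Ω → E) (u : Ω) : E := ∫ s, h (s⁻¹ • u) ∂μ

theorem orbitIntegral_smul [MeasurableMul G] [μ.IsMulLeftInvariant] (h : Ω → E) (t : G)
    (u : Ω) : orbitIntegral μ h (t • u) = orbitIntegral μ h u := by
  simpa [orbitIntegral, mul_smul] using
    integral_mul_left_eq_self (fun s ↦ h (s⁻¹ • u)) t⁻¹

theorem orbitIntegral_eq_of_orbitRel [MeasurableMul G] [μ.IsMulLeftInvariant] (h : Ω → E)
    {u v : Ω} (huv : orbitRel G Ω u v) : orbitIntegral μ h u = orbitIntegral μ h v := by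
  obtain ⟨t, rfl⟩ := huv
  exact orbitIntegral_smul μ h t v

theorem orbitIntegral_smul_of_smul_invariant [CompleteSpace E] (h : Ω → ℝ) {g : Ω → E}
    (hg : ∀ (t : G) u, g (t • u) = g u) (u : Ω) :
    orbitIntegral μ (fun v ↦ h v • g v) u = orbitIntegral μ h u • g u := by
  simp only [orbitIntegral, hg]
  exact integral_smul_const _ _

variable [TopologicalSpace G] [TopologicalSpace Ω] [ProperSMul G Ω] [ContinuousInv G]
  [OpensMeasurableSpace G]

theorem integrable_comp_inv_smul [T2Space G] [IsFiniteMeasureOnCompacts μ] {F : Type*}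
    [NormedAddCommGroup F] {h : Ω → F} (hh : Continuous h) (hh' : HasCompactSupport h)
    (u : Ω) : Integrable (fun s ↦ h (s⁻¹ • u)) μ := by
  have hC :=
    ProperSMul.isCompact_setOfPred_inter_nonempty (G := G) hh' (isCompact_singleton (x := u))
  refine ((hh.comp (by fun_prop)).continuousOn.integrableOn_compact hC)
    |>.integrable_of_forall_notMem_eq_zero fun _ hs ↦ notMem_support.1 fun h' ↦ ?_
  exact hs (support_comp_inv_smul_subset h (mem_singleton u) h')

theorem continuous_orbitIntegral [LocallyCompactSpace Ω] [FirstCountableTopology Ω]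
    [IsLocallyFiniteMeasure μ] [SecondCountableTopologyEither G E] {h : Ω → E}
    (hh : Continuous h) (hh' : HasCompactSupport h) : Continuous (orbitIntegral μ h) := by
  refine continuous_iff_continuousAt.2 fun u₀ ↦ ?_
  obtain ⟨N, hN, hNu₀⟩ := exists_compact_mem_nhds u₀
  have hcont : Continuous fun u ↦
      ∫ s in {s : G | (s • tsupport h ∩ N).Nonempty}, h (s⁻¹ • u) ∂μ :=
    continuous_parametric_integral_of_continuous (f := fun u s ↦ h (s⁻¹ • u)) (by fun_prop)
      (ProperSMul.isCompact_setOfPred_inter_nonempty hh' hN)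
  refine hcont.continuousAt.congr (Filter.eventually_of_mem hNu₀ fun u hu ↦ ?_)
  exact setIntegral_eq_integral_of_forall_compl_eq_zero fun s hs ↦
    notMem_support.1 fun h' ↦ hs (support_comp_inv_smul_subset h hu h')

theorem orbitIntegral_pos [T2Space G] [IsFiniteMeasureOnCompacts μ] [μ.IsOpenPosMeasure]
    {h : Ω → ℝ} (hh : Continuous h) (hh' : HasCompactSupport h) (h0 : 0 ≤ h) {u : Ω}
    (hu : 0 < h u) : 0 < orbitIntegral μ h u :=
  integral_pos_of_integrable_nonneg_nonzero (x := 1) (hh.comp (by fun_prop))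
    (integrable_comp_inv_smul μ hh hh' u) (fun s ↦ h0 _) (by simpa using hu.ne')

variable [MeasurableMul G] [T2Space G] [μ.IsHaarMeasure]
  [LocallyCompactSpace Ω] [T2Space Ω]

theorem exists_cutoff_orbitIntegral_pos {K : Set (Quotient (orbitRel G Ω))}
    (hK : IsCompact K) : ∃ h : Ω → ℝ, Continuous h ∧ HasCompactSupport h ∧
      ∀ u, Quotient.mk _ u ∈ K → 0 < orbitIntegral μ h u := by
  have hq := isOpenQuotientMap_quotientMk (Γ := G) (T := Ω)
  obtain ⟨L, hL, hKL⟩ := hq.isOpenMap.exists_isCompact_image_superset hq.surjective hK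
  obtain ⟨h, h_one, -, hh', h01⟩ :=
    exists_continuous_one_zero_of_isCompact hL isClosed_empty (disjoint_empty L)
  have h0 : 0 ≤ ⇑h := fun u ↦ (h01 u).1
  refine ⟨h, h.continuous, hh', fun u hu ↦ ?_⟩
  obtain ⟨v, hv, hvu⟩ := hKL hu
  rw [orbitIntegral_eq_of_orbitRel μ h (Quotient.exact hvu.symm)]
  exact orbitIntegral_pos μ h.continuous hh' h0 (by simp [h_one hv])

theorem exists_orbitIntegral_eq [LocallyCompactSpace G] [FirstCountableTopology Ω]
    [CompleteSpace E]
    {f : Quotient (orbitRel G Ω) → E} (hf : Continuous f) (hf' : HasCompactSupport f) :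
    ∃ a : Ω → E, Continuous a ∧ HasCompactSupport a ∧
      ∀ u, orbitIntegral μ a u = f (Quotient.mk _ u) := by
  let q := Quotient.mk (orbitRel G Ω)
  obtain ⟨h, hh, hh', hpos⟩ := exists_cutoff_orbitIntegral_pos μ hf'
  let H := orbitIntegral μ h
  let g u := (H u)⁻¹ • f (q u)
  have hg : ∀ (t : G) u, g (t • u) = g u := fun t u ↦ by
    simp only [g, H, q, orbitIntegral_smul, orbitRel.Quotient.quotient_smul_eq]
  refine ⟨fun u ↦ h u • g u, ?_, hh'.mono (support_smul_subset_left _ _), fun u ↦ ?_⟩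
  · have hg_cont : ContinuousOn g {u | H u ≠ 0} :=
      ((continuous_orbitIntegral μ hh hh').continuousOn.inv₀ fun _ hu ↦ hu).smul
        (hf.comp continuous_quot_mk).continuousOn
    refine (hh.continuousOn.smul hg_cont).continuous_of_tsupport_subset
      (isOpen_ne_fun (continuous_orbitIntegral μ hh hh') continuous_const) ?_
    calc tsupport (fun u ↦ h u • g u) ⊆ tsupport (f ∘ q) :=
          closure_mono ((support_smul_subset_right _ _).trans (support_smul_subset_right _ _))
      _ ⊆ q ⁻¹' tsupport f := tsupport_comp_subset_preimage f continuous_quot_mk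
      _ ⊆ {u | H u ≠ 0} := fun u hu ↦ (hpos u hu).ne'
  · rw [orbitIntegral_smul_of_smul_invariant μ h hg]
    by_cases hu : q u ∈ tsupport f
    · simp [g, H, q, smul_smul, mul_inv_cancel₀ (hpos u hu).ne']
    · simp [g, q, image_eq_zero_of_notMem_tsupport hu]

end MulAction

theorem orbit_average_surjective_general
    {G Ω : Type*} [Group G] [TopologicalSpace G] [IsTopologicalGroup G]
    [LocallyCompactSpace G] [T2Space G]
    [MeasurableSpace G] [BorelSpace G]
    (μ : Measure G) [μ.IsHaarMeasure]
    [TopologicalSpace Ω] [LocallyCompactSpace Ω] [T2Space Ω] [SecondCountableTopology Ω]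
    [MulAction G Ω]
    (hproper : IsProperMap (fun p : G × Ω => (p.1 • p.2, p.2)))
    (f : Quotient (MulAction.orbitRel G Ω) → ℂ)
    (hf : Continuous f) (hf' : HasCompactSupport f) :
    ∃ a : Ω → ℂ, Continuous a ∧ HasCompactSupport a ∧
      ∀ u : Ω, ∫ s, a (s⁻¹ • u) ∂μ = f (Quotient.mk (MulAction.orbitRel G Ω) u) := by
  have : ProperSMul G Ω := ⟨hproper⟩
  exact MulAction.exists_orbitIntegral_eq μ hf hf'

/-- For a free and proper action of a locally compact group `G` on `Ω`, the averaging map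
`Ψ : C_c(Ω) → C_c(G\Ω)`, `Ψ(a)(q(u)) = ∫_G a (s⁻¹ • u) ds`, is surjective: every continuous
compactly supported function on the orbit space is of the form `Ψ(a)`. -/
theorem orbit_average_surjective
    {G Ω : Type*} [Group G] [TopologicalSpace G] [IsTopologicalGroup G]
    [LocallyCompactSpace G] [T2Space G] [SecondCountableTopology G]
    [MeasurableSpace G] [BorelSpace G]
    (μ : Measure G) [μ.IsHaarMeasure]
    [TopologicalSpace Ω] [LocallyCompactSpace Ω] [T2Space Ω] [SecondCountableTopology Ω]
    [MulAction G Ω] [ContinuousSMul G Ω]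
    (hfree : ∀ (s : G) (u : Ω), s • u = u → s = 1)
    (hproper : IsProperMap (fun p : G × Ω => (p.1 • p.2, p.2)))
    (f : Quotient (MulAction.orbitRel G Ω) → ℂ)
    (hf : Continuous f) (hf' : HasCompactSupport f) :
    ∃ a : Ω → ℂ, Continuous a ∧ HasCompactSupport a ∧
      ∀ u : Ω, ∫ s, a (s⁻¹ • u) ∂μ = f (Quotient.mk (MulAction.orbitRel G Ω) u) :=
  orbit_average_surjective_general μ hproper f hf hf'
end
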